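/- arXiv:2509.03123 — 5 statements merged into one kernel-verified Lean document; each statement's English description precedes it below -/
import Mathlib

section
/- Let q be a positive even modulus and ζ = 2^{(log₂ q)/2 − 1} (so ζ² < q/4). Let x, y ∈ [0, ζ] be integers, a, b integers with ζ > a > b > 0, and r ∈ {−1, 1}. Then v = a·r·(x − y) + b·r satisfies |v| < q/2 and v ≠ 0; moreover v > 0 if and only if (x ≥ y and r = 1) or (x < y and r = −1). -/
/-!
Write `v = r * w` with `w = a * (x - y) + b`. Since `b < a` and `x - y` is an integer, the
blinding offset `b` never outweighs a nonzero difference: `w > 0` when `x ≥ y` and `w ≤ b - a < 0`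
when `x < y`. As `|x - y| ≤ ζ` and `b < a ≤ ζ - 1`, also `|w| < ζ² < q / 4`, so multiplying by
`r = ±1` flips the sign of `w` without leaving the range `(-q/2, q/2)`.
-/

section SignFlip

variable {α : Type*} [Ring α] [LinearOrder α] {r w : α}

lemma abs_mul_of_sign_unit (hr : r = -1 ∨ r = 1) : |r * w| = |w| := by
  rcases hr with rfl | rfl <;> simp

lemma mul_pos_iff_of_sign_unit [IsStrictOrderedRing α] (hr : r = -1 ∨ r = 1) :
    0 < r * w ↔ (0 < w ∧ r = 1) ∨ (w < 0 ∧ r = -1) := by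
  rcases hr with rfl | rfl <;> norm_num

end SignFlip

section BlindedDifference

variable {x y a b : ℤ}

lemma mul_sub_add_pos_of_le (hb0 : 0 < b) (hba : b < a) (hyx : y ≤ x) :
    0 < a * (x - y) + b := by
  have : 0 ≤ a * (x - y) := mul_nonneg (by omega) (by omega)
  omega

lemma mul_sub_add_neg_of_lt (hb0 : 0 < b) (hba : b < a) (hxy : x < y) : a * (x - y) + b < 0 := by
  have : a * (x - y) ≤ a * (-1) := mul_le_mul_of_nonneg_left (by omega) (by omega)
  omega

lemma mul_sub_add_pos_iff (hb0 : 0 < b) (hba : b < a) : 0 < a * (x - y) + b ↔ y ≤ x :=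
  ⟨fun hw => not_lt.mp fun hxy => (mul_sub_add_neg_of_lt hb0 hba hxy).not_gt hw,
    mul_sub_add_pos_of_le hb0 hba⟩

lemma mul_sub_add_neg_iff (hb0 : 0 < b) (hba : b < a) : a * (x - y) + b < 0 ↔ x < y :=
  ⟨fun hw => not_le.mp fun hyx => (mul_sub_add_pos_of_le hb0 hba hyx).not_gt hw,
    mul_sub_add_neg_of_lt hb0 hba⟩

lemma mul_sub_add_ne_zero (hb0 : 0 < b) (hba : b < a) : a * (x - y) + b ≠ 0 := by
  rcases le_or_gt y x with hyx | hxy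
  · exact (mul_sub_add_pos_of_le hb0 hba hyx).ne'
  · exact (mul_sub_add_neg_of_lt hb0 hba hxy).ne

lemma abs_mul_sub_add_lt_sq {ζ : ℤ} (hx0 : 0 ≤ x) (hxζ : x ≤ ζ) (hy0 : 0 ≤ y) (hyζ : y ≤ ζ)
    (haζ : a < ζ) (hba : b < a) (hb0 : 0 < b) : |a * (x - y) + b| < ζ ^ 2 := by
  have hupper : a * (x - y) ≤ a * ζ := mul_le_mul_of_nonneg_left (by omega) (by omega)
  have hlower : a * (-ζ) ≤ a * (x - y) := mul_le_mul_of_nonneg_left (by omega) (by omega)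
  rw [abs_lt]
  constructor <;> nlinarith

end BlindedDifference

theorem stmt4_general (q ζ x y a b r v : ℤ)
    (hsq : ζ ^ 2 < q / 4)
    (hx0 : 0 ≤ x) (hxζ : x ≤ ζ) (hy0 : 0 ≤ y) (hyζ : y ≤ ζ)
    (haζ : a < ζ) (hba : b < a) (hb0 : 0 < b)
    (hr : r = -1 ∨ r = 1)
    (hv : v = a * r * (x - y) + b * r) :
    |v| < q / 2 ∧ v ≠ 0 ∧ (0 < v ↔ ((y ≤ x ∧ r = 1) ∨ (x < y ∧ r = -1))) := by
  have hvw : v = r * (a * (x - y) + b) := by rw [hv]; ring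
  have hr0 : r ≠ 0 := by omega
  have hw := abs_mul_sub_add_lt_sq hx0 hxζ hy0 hyζ haζ hba hb0
  have hq : q / 4 ≤ q / 2 := by have := sq_nonneg ζ; omega
  refine ⟨?_, ?_, ?_⟩
  · rw [hvw, abs_mul_of_sign_unit hr]
    omega
  · rw [hvw]
    exact mul_ne_zero hr0 (mul_sub_add_ne_zero hb0 hba)
  · rw [hvw, mul_pos_iff_of_sign_unit hr, mul_sub_add_pos_iff hb0 hba,
      mul_sub_add_neg_iff hb0 hba]

/-- Core correctness of PackObliviousCom: with q even and positive,
ζ = 2^{(log₂ q)/2 − 1} (so ζ² < q/4), 0 ≤ x, y ≤ ζ, ζ > a > b > 0 and r ∈ {−1,1},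
the blinded difference v = a·r·(x−y) + b·r satisfies |v| < q/2, v ≠ 0, and
v > 0 iff (x ≥ y ∧ r = 1) ∨ (x < y ∧ r = −1). -/
theorem stmt4 (q ζ x y a b r v : ℤ)
    (hq : 0 < q) (hqe : Even q)
    (hζ : ζ = 2 ^ (Nat.log 2 q.toNat / 2 - 1))
    (hsq : ζ ^ 2 < q / 4)
    (hx0 : 0 ≤ x) (hxζ : x ≤ ζ) (hy0 : 0 ≤ y) (hyζ : y ≤ ζ)
    (haζ : a < ζ) (hba : b < a) (hb0 : 0 < b)
    (hr : r = -1 ∨ r = 1)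
    (hv : v = a * r * (x - y) + b * r) :
    |v| < q / 2 ∧ v ≠ 0 ∧ (0 < v ↔ ((y ≤ x ∧ r = 1) ∨ (x < y ∧ r = -1))) :=
  stmt4_general q ζ x y a b r v hsq hx0 hxζ hy0 hyζ haζ hba hb0 hr hv
end

section
/- With notation as in PackObliviousCom, let x, y ∈ [0, ζ], ζ > a > b > 0, r ∈ {−1,1}, v = a·r·(x−y) + b·r, v' = (if v < 0 then 0 else 1), and c' = (if r = −1 then 1 else 0). Then c = c' + r·v' satisfies: c = 0 if x < y and c = 1 if x ≥ y. -/
/-! Write `v = r·(a·(x−y) + b)`. Because `x − y` is an integer and `0 < b < a`, the inner factor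
`a·(x−y) + b` is positive exactly when `x ≥ y` and negative exactly when `x < y` (it is never
zero). So for `r = 1` the sign bit `v'` is `[x ≥ y]` and `c = v'`, while for `r = −1` it is
`[x < y]` and `c = 1 − v'`. -/

section BlindedDifference

variable {a b d : ℤ}

theorem blinded_pos_iff (hb : 0 < b) (hba : b < a) : 0 < a * d + b ↔ 0 ≤ d := by
  constructor
  · intro h
    by_contra! hd
    nlinarith
  · intro hd
    nlinarith

theorem blinded_neg_iff (hb : 0 < b) (hba : b < a) : a * d + b < 0 ↔ d < 0 := by
  constructor
  · intro h
    by_contra! hd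
    nlinarith
  · intro hd
    have hd' : d ≤ -1 := by omega
    nlinarith

end BlindedDifference

theorem stmt5_general (x y a b r v v' c' c : ℤ)
    (hba : b < a) (hb0 : 0 < b)
    (hr : r = -1 ∨ r = 1)
    (hv : v = a * r * (x - y) + b * r)
    (hv' : v' = if v < 0 then 0 else 1)
    (hc' : c' = if r = -1 then 1 else 0)
    (hc : c = c' + r * v') :
    (x < y → c = 0) ∧ (y ≤ x → c = 1) := by
  have hv_factor : v = r * (a * (x - y) + b) := by rw [hv]; ring
  rcases hr with rfl | rfl
  · have hsign : v < 0 ↔ y ≤ x := by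
      rw [hv_factor, neg_one_mul, neg_neg_iff_pos, blinded_pos_iff hb0 hba, sub_nonneg]
    subst hc hc' hv'
    constructor <;> intro h
    · simp [hsign, not_le.mpr h]
    · simp [hsign, h]
  · have hsign : v < 0 ↔ x < y := by
      rw [hv_factor, one_mul, blinded_neg_iff hb0 hba, sub_neg]
    subst hc hc' hv'
    constructor <;> intro h
    · simp [hsign, h]
    · simp [hsign, not_lt.mpr h]

/-- Truth-table correctness of PackObliviousCom unblinding: with
v = a·r·(x−y) + b·r, v' the sign bit of v, and c' = [r = −1],
the unblinded bit c = c' + r·v' equals 0 iff x < y and 1 iff x ≥ y. -/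
theorem stmt5 (ζ x y a b r v v' c' c : ℤ)
    (hx0 : 0 ≤ x) (hxζ : x ≤ ζ) (hy0 : 0 ≤ y) (hyζ : y ≤ ζ)
    (haζ : a < ζ) (hba : b < a) (hb0 : 0 < b)
    (hr : r = -1 ∨ r = 1)
    (hv : v = a * r * (x - y) + b * r)
    (hv' : v' = if v < 0 then 0 else 1)
    (hc' : c' = if r = -1 then 1 else 0)
    (hc : c = c' + r * v') :
    (x < y → c = 0) ∧ (y ≤ x → c = 1) :=
  stmt5_general x y a b r v v' c' c hba hb0 hr hv hv' hc' hc
end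

section
/- Let x', y' be integers with 2x' and 2y'−1 in [0, ζ], a, b integers with ζ > a > b > 0, and r, r' ∈ {−1,1}. Then v = a·r·r'·(2(x'−y') + 1) + r·b is nonzero, satisfies |v| ≤ ζ² + ζ, and the support of |v| is identical regardless of the value of r; moreover sign(v) = r·r'·sign(2(x'−y')+1) when b < a (since |a(2(x'−y')+1)| ≥ a > b). -/
/-!
The shifted difference `d = 2(x' - y') + 1` is odd, so `|d| ≥ 1` and the mask satisfies
`|a r' d| ≥ a > b`: adding `b` cannot reach or cross zero, hence `a r' d + b` is nonzero with the
sign of `r' d`. Multiplying by `r = ±1` then flips the sign and leaves the absolute value alone.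
-/

lemma Int.sign_add_of_abs_lt {x y : ℤ} (h : |y| < |x|) : (x + y).sign = x.sign := by
  rcases lt_trichotomy x 0 with hx | rfl | hx
  · rw [abs_of_neg hx, abs_lt] at h
    rw [Int.sign_eq_neg_one_of_neg hx, Int.sign_eq_neg_one_of_neg (by omega)]
  · exact absurd h (abs_nonneg y).not_gt
  · rw [abs_of_pos hx, abs_lt] at h
    rw [Int.sign_eq_one_of_pos hx, Int.sign_eq_one_of_pos (by omega)]

lemma Int.sign_eq_self_of_abs_eq_one {u : ℤ} (hu : |u| = 1) : u.sign = u := by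
  rcases abs_eq_abs.mp (hu.trans abs_one.symm) with rfl | rfl <;> rfl

lemma add_ne_zero_of_abs_lt {α : Type*} [AddCommGroup α] [LinearOrder α] [IsOrderedAddMonoid α]
    {x y : α} (h : |y| < |x|) : x + y ≠ 0 := by
  intro hxy
  rw [eq_neg_of_add_eq_zero_right hxy, abs_neg] at h
  exact h.false

/-- Correctness and sign-hiding of the enhanced protocol PackObliviousCom⁺:
v = a·r·r'·(2(x'−y')+1) + r·b is nonzero, |v| ≤ ζ² + ζ, |v| is independent of the
value of r (it equals |a·r'·(2(x'−y')+1) + b|), and the sign of v equals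
r·r'·sign(2(x'−y')+1). -/
theorem stmt7 (ζ x' y' a b r r' v : ℤ)
    (hx0 : 0 ≤ 2 * x') (hxζ : 2 * x' ≤ ζ)
    (hy0 : 0 ≤ 2 * y' - 1) (hyζ : 2 * y' - 1 ≤ ζ)
    (haζ : a < ζ) (hba : b < a) (hb0 : 0 < b)
    (hr : r = -1 ∨ r = 1) (hr' : r' = -1 ∨ r' = 1)
    (hv : v = a * r * r' * (2 * (x' - y') + 1) + r * b) :
    v ≠ 0 ∧ |v| ≤ ζ ^ 2 + ζ ∧
    |v| = |a * r' * (2 * (x' - y') + 1) + b| ∧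
    Int.sign v = r * r' * Int.sign (2 * (x' - y') + 1) := by
  set d := 2 * (x' - y') + 1
  have hr1 : |r| = 1 := by rcases hr with rfl | rfl <;> rfl
  have hr'1 : |r'| = 1 := by rcases hr' with rfl | rfl <;> rfl
  have hd : |d| ≤ ζ := by
    rw [show d = 2 * x' - (2 * y' - 1) by ring]
    exact abs_sub_le_of_nonneg_of_le hx0 hxζ hy0 hyζ
  have ha0 : 0 < a := hb0.trans hba
  have had : |a * r' * d| = a * |d| := by rw [abs_mul, abs_mul, hr'1, mul_one, abs_of_pos ha0]
  have hbad : |b| < |a * r' * d| := by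
    rw [had, abs_of_pos hb0]
    exact hba.trans_le (le_mul_of_one_le_right ha0.le (Int.one_le_abs (by omega)))
  have hvw : v = r * (a * r' * d + b) := by rw [hv]; ring
  have habs : |v| = |a * r' * d + b| := by rw [hvw, abs_mul, hr1, one_mul]
  refine ⟨?_, ?_, habs, ?_⟩
  · exact abs_ne_zero.mp (habs ▸ abs_ne_zero.mpr (add_ne_zero_of_abs_lt hbad))
  · calc |v| ≤ |a * r' * d| + |b| := habs ▸ abs_add_le _ _
      _ = a * |d| + b := by rw [had, abs_of_pos hb0]
      _ ≤ ζ * ζ + ζ := by gcongr <;> omega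
      _ = ζ ^ 2 + ζ := by ring
  · rw [hvw, Int.sign_mul, Int.sign_add_of_abs_lt hbad, Int.sign_mul, Int.sign_mul,
      Int.sign_eq_self_of_abs_eq_one hr1, Int.sign_eq_self_of_abs_eq_one hr'1,
      Int.sign_eq_one_of_pos ha0]
    ring
end

section
/- Additive blinding of path costs is correct: let the client assign to node n a left cost c_n + r'_n and right cost 1 − c_n − r'_n, and the server assign left cost −r'_n and right cost r'_n, where r'_n are arbitrary integers. Then for every leaf, the sum of the client's path sum and the server's path sum equals the unblinded path cost (sum of c_n over left edges plus (1 − c_n) over right edges along the path). In particular, exactly one leaf has combined sum 0 and all other leaves have combined sum ≥ 1. -/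
/-- A binary decision tree whose nodes carry a comparison bit c and a blinding
offset ρ (an arbitrary integer). -/
inductive BDTree where
  | leaf : BDTree
  | node : Bool → ℤ → BDTree → BDTree → BDTree

/-- Client's blinded path sums: left cost c + ρ, right cost 1 − c − ρ. -/
def BDTree.clientCosts : BDTree → List ℤ
  | .leaf => [0]
  | .node c ρ l r =>
      (l.clientCosts.map (· + ((if c then 1 else 0) + ρ))) ++
        (r.clientCosts.map (· + (1 - (if c then 1 else 0) - ρ)))

/-- Server's perturbation path sums: left cost −ρ, right cost ρ. -/
def BDTree.serverCosts : BDTree → List ℤ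
  | .leaf => [0]
  | .node _ ρ l r =>
      (l.serverCosts.map (· + (-ρ))) ++ (r.serverCosts.map (· + ρ))

/-- Unblinded path costs: left cost c, right cost 1 − c. -/
def BDTree.trueCosts : BDTree → List ℤ
  | .leaf => [0]
  | .node c _ l r =>
      (l.trueCosts.map (· + (if c then 1 else 0))) ++
        (r.trueCosts.map (· + (if c then 0 else 1)))

/-!
Edge by edge the client's costs c + ρ and 1 − c − ρ and the server's −ρ and ρ add up to
c and 1 − c, so the blinding cancels and the combined path sums are the true path costs.
These are sums of bits, hence nonnegative, and vanish only on the one path that goes left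
at every node with c = 0 and right at every node with c = 1.
-/

theorem List.existsUnique_getD_eq_of_count_eq_one {α : Type*} [BEq α] [LawfulBEq α]
    {l : List α} {a : α} (d : α) (h : l.count a = 1) :
    ∃! j, j < l.length ∧ l.getD j d = a := by
  induction l with
  | nil => simp at h
  | cons x l ih =>
    by_cases hx : x = a
    · subst hx
      have hxl : x ∉ l := List.count_eq_zero.mp (by simpa using h)
      refine ⟨0, ⟨by simp, rfl⟩, ?_⟩
      rintro (_ | j) ⟨hj, hjx⟩
      · rfl
      · rw [List.getD_cons_succ, List.getD_eq_getElem _ _ (by simpa using hj)] at hjx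
        exact absurd (hjx ▸ List.getElem_mem _) hxl
    · obtain ⟨j, ⟨hj, hja⟩, huniq⟩ := ih (by simpa [List.count_cons, hx] using h)
      refine ⟨j + 1, ⟨by simpa using hj, hja⟩, ?_⟩
      rintro (_ | k) ⟨hk, hka⟩
      · exact absurd hka hx
      · exact congrArg (· + 1) (huniq k ⟨by simpa using hk, hka⟩)

namespace BDTree

theorem length_clientCosts (t : BDTree) : t.clientCosts.length = t.trueCosts.length := by
  induction t with
  | leaf => rfl
  | node _ _ l r ihl ihr => simp [clientCosts, trueCosts, ihl, ihr]

theorem length_serverCosts (t : BDTree) : t.serverCosts.length = t.trueCosts.length := by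
  induction t with
  | leaf => rfl
  | node _ _ l r ihl ihr => simp [serverCosts, trueCosts, ihl, ihr]

theorem zipWith_add_clientCosts_serverCosts (t : BDTree) :
    List.zipWith (· + ·) t.clientCosts t.serverCosts = t.trueCosts := by
  induction t with
  | leaf => rfl
  | node _ _ l r ihl ihr =>
    rw [clientCosts, serverCosts, trueCosts,
      List.zipWith_append (by simp [length_clientCosts, length_serverCosts]),
      List.zipWith_map, List.zipWith_map, ← ihl, ← ihr, List.map_zipWith, List.map_zipWith]
    congr 2 <;> funext x y <;> split_ifs <;> ring

theorem clientCosts_getD_add_serverCosts_getD (t : BDTree) (j : ℕ) (hj : j < t.trueCosts.length) :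
    t.clientCosts.getD j 0 + t.serverCosts.getD j 0 = t.trueCosts.getD j 0 := by
  rw [← zipWith_add_clientCosts_serverCosts] at hj ⊢
  rw [List.getD_eq_getElem _ _ hj, List.getElem_zipWith, List.getD_eq_getElem, List.getD_eq_getElem]

theorem nonneg_of_mem_trueCosts {t : BDTree} {x : ℤ} (hx : x ∈ t.trueCosts) : 0 ≤ x := by
  induction t generalizing x with
  | leaf => simp_all [trueCosts]
  | node _ _ l r ihl ihr =>
    simp only [trueCosts, List.mem_append, List.mem_map] at hx
    rcases hx with ⟨y, hy, rfl⟩ | ⟨y, hy, rfl⟩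
    · have := ihl hy; split <;> omega
    · have := ihr hy; split <;> omega

theorem getD_trueCosts_nonneg (t : BDTree) (j : ℕ) : 0 ≤ t.trueCosts.getD j 0 := by
  by_cases hj : j < t.trueCosts.length
  · exact nonneg_of_mem_trueCosts (List.getD_eq_getElem _ _ hj ▸ List.getElem_mem hj)
  · rw [List.getD_eq_default _ _ (not_lt.mp hj)]

theorem count_zero_trueCosts (t : BDTree) : t.trueCosts.count 0 = 1 := by
  induction t with
  | leaf => rfl
  | node c _ l r ihl ihr =>
    have hshift (s : BDTree) : (s.trueCosts.map (· + 1)).count 0 = 0 :=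
      List.count_eq_zero.mpr fun h => by
        obtain ⟨x, hx, hx0⟩ := List.mem_map.mp h
        have := nonneg_of_mem_trueCosts hx
        omega
    cases c <;> simp [trueCosts, List.count_append, ihl, ihr, hshift]

end BDTree

/-- Additive blinding of path costs is correct: client's and server's path sums
add up to the unblinded path cost for every leaf; consequently exactly one leaf
has combined sum 0 and all others have combined sum ≥ 1. -/
theorem stmt11 (t : BDTree) :
    (∀ j, j < t.trueCosts.length →
      t.clientCosts.getD j 0 + t.serverCosts.getD j 0 = t.trueCosts.getD j 0) ∧
    (∃! j, j < t.trueCosts.length ∧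
      t.clientCosts.getD j 0 + t.serverCosts.getD j 0 = 0) ∧
    (∀ j, j < t.trueCosts.length →
      t.clientCosts.getD j 0 + t.serverCosts.getD j 0 ≠ 0 →
      1 ≤ t.clientCosts.getD j 0 + t.serverCosts.getD j 0) := by
  have hsum := t.clientCosts_getD_add_serverCosts_getD
  refine ⟨hsum, ?_, fun j hj hne => ?_⟩
  · obtain ⟨j, ⟨hj, hj0⟩, huniq⟩ :=
      List.existsUnique_getD_eq_of_count_eq_one 0 t.count_zero_trueCosts
    exact ⟨j, ⟨hj, (hsum j hj).trans hj0⟩,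
      fun k hk => huniq k ⟨hk.1, (hsum k hk.1).symm.trans hk.2⟩⟩
  · rw [hsum j hj] at hne ⊢
    have := t.getD_trueCosts_nonneg j
    omega
end

section
/- Flip-correction for obfuscated trees is correct: let c ∈ {0,1} be the true comparison bit at a node and υ ∈ {−1, 1} indicate whether the node's children were swapped (υ = −1 means swapped). Define the published bit c̃ = c if υ = 1 and c̃ = 1 − c if υ = −1. Then evaluating the swapped tree with bits c̃ follows the same leaf (under the child-swap isomorphism) as evaluating the original tree with bits c. -/
/-- A decision tree whose nodes are labelled by an index n; the comparison bit
at node n is given externally by a function c : ℕ → Bool. -/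
inductive ITree where
  | leaf : ℤ → ITree
  | node : ℕ → ITree → ITree → ITree

/-- Evaluate with bits c: at node n go right if c n = true (bit 1), left if
c n = false (bit 0); return the weight of the reached leaf. -/
def ITree.eval (c : ℕ → Bool) : ITree → ℤ
  | .leaf w => w
  | .node n l r => if c n then (r.eval c) else (l.eval c)

/-- Obfuscate a tree: swap the two children of node n exactly when sw n = true
(υ = −1 means swapped). -/
def ITree.obf (sw : ℕ → Bool) : ITree → ITree
  | .leaf w => .leaf w
  | .node n l r =>
      if sw n then .node n (r.obf sw) (l.obf sw)
      else .node n (l.obf sw) (r.obf sw)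

/-- Flip-correction for obfuscated trees is correct: evaluating the swapped tree
with the flipped bits c̃ (c̃ n = ¬ c n at swapped nodes, c n otherwise) reaches
the same leaf (weight) as evaluating the original tree with bits c. -/
theorem stmt17 (t : ITree) (c : ℕ → Bool) (sw : ℕ → Bool) :
    (t.obf sw).eval (fun n => if sw n then !(c n) else c n) = t.eval c := by
  induction t with
  | leaf w => rfl
  | node n l r ihl ihr =>
    cases hs : sw n <;> cases hc : c n <;> simp [ITree.obf, ITree.eval, hs, hc, ihl, ihr]
end
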